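/- The maps δ¹_{0,0}(L_m) = v_0 ⊗ w_m and δ²_{0,0}(L_m) = m v_0 ⊗ w_m are 1-cocycles of the Witt algebra with coefficients in 𝓕_0 ⊗ 𝓕_0, and neither is a 1-coboundary. -/

import Mathlib

/-!
Since `L_m · (v_0 ⊗ w_n) = -n v_0 ⊗ w_{m+n}`, a family `L_m ↦ f(m) v_0 ⊗ w_m` is a cocycle exactly
when `(m - n) f(m + n) = m f(m) - n f(n)`, which holds for every affine `f`. `L_0` acts diagonally
by `-(i + j)`, so no coboundary has a `v_0 ⊗ w_0`-component at `L_0`, which rules out `δ¹`. For a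
coboundary `L_n ↦ L_n · u` the `v_0 ⊗ w_n`-component is `n u(-n, n)`, nonzero for only finitely many
`n` as `u` is finitely supported, whereas for `δ²` it is `n`.
-/

/-- The action of the Witt basis element `L m` on `𝓕_α ⊗ 𝓕_β`, realized on
`(ℤ × ℤ) →₀ ℂ` with basis `v_i ⊗ w_j ↦ single (i, j) 1`:
`L_m · (v_i ⊗ w_j) = -(i + αm) v_{m+i} ⊗ w_j - (j + βm) v_i ⊗ w_{m+j}`. -/
noncomputable def tact (α β : ℂ) (m : ℤ) : ((ℤ × ℤ) →₀ ℂ) →ₗ[ℂ] ((ℤ × ℤ) →₀ ℂ) :=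
  Finsupp.lsum ℂ fun p => LinearMap.toSpanSingleton ℂ ((ℤ × ℤ) →₀ ℂ)
    ((-((p.1 : ℂ) + α * m)) • Finsupp.single (m + p.1, p.2) (1 : ℂ)
      + (-((p.2 : ℂ) + β * m)) • Finsupp.single (p.1, m + p.2) (1 : ℂ))

/-- A family `d n = d(L_n)` is a 1-cocycle of the Witt algebra with
coefficients in `𝓕_α ⊗ 𝓕_β`: `d([L_m, L_n]) = L_m · d(L_n) - L_n · d(L_m)`. -/
def IsCocycle (α β : ℂ) (d : ℤ → ((ℤ × ℤ) →₀ ℂ)) : Prop :=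
  ∀ m n : ℤ, ((m - n : ℤ) : ℂ) • d (m + n) = tact α β m (d n) - tact α β n (d m)

/-- `d` is a 1-coboundary: `d(L_n) = L_n · u` for a fixed `u` in the module. -/
def IsCoboundary (α β : ℂ) (d : ℤ → ((ℤ × ℤ) →₀ ℂ)) : Prop :=
  ∃ u : (ℤ × ℤ) →₀ ℂ, ∀ n : ℤ, d n = tact α β n u

open Finsupp

lemma tact_single (α β : ℂ) (m : ℤ) (p : ℤ × ℤ) (c : ℂ) :
    tact α β m (single p c) =
      (-((p.1 : ℂ) + α * m) * c) • single (m + p.1, p.2) 1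
        + (-((p.2 : ℂ) + β * m) * c) • single (p.1, m + p.2) 1 := by
  simp only [tact, lsum_single, LinearMap.toSpanSingleton_apply, smul_add, smul_smul, mul_comm c]

lemma tact_apply (α β : ℂ) (m : ℤ) (u : (ℤ × ℤ) →₀ ℂ) (i j : ℤ) :
    tact α β m u (i, j) =
      -((i - m : ℤ) + α * m) * u (i - m, j) - ((j - m : ℤ) + β * m) * u (i, j - m) := by
  induction u using Finsupp.induction_linear with
  | zero => simp
  | add u v hu hv => simp only [map_add, Finsupp.add_apply, hu, hv]; ring
  | single p c =>
    obtain ⟨k, l⟩ := p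
    rw [tact_single, sub_eq_add_neg, ← neg_mul, Finsupp.add_apply]
    congr 1 <;> simp only [Finsupp.smul_apply, smul_eq_mul, single_apply, Prod.mk.injEq] <;>
      split_ifs with _ h <;>
        first | (exfalso; omega) | (obtain ⟨rfl, rfl⟩ := h; push_cast; ring) | simp

lemma isCocycle_affine (a b : ℂ) : IsCocycle 0 0 fun m => (a + b * m) • single (0, m) 1 := by
  intro m n
  simp only [map_smul, tact_single, Int.cast_zero, zero_mul, zero_add, neg_zero, zero_smul,
    add_zero, add_comm n m]
  push_cast
  module

lemma IsCoboundary.apply_zero_zero {α β : ℂ} {d : ℤ → (ℤ × ℤ) →₀ ℂ} (h : IsCoboundary α β d) :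
    d 0 (0, 0) = 0 := by
  obtain ⟨u, hu⟩ := h
  simp [hu, tact_apply]

lemma IsCoboundary.finite_setOf_apply_ne_zero {d : ℤ → (ℤ × ℤ) →₀ ℂ} (h : IsCoboundary 0 0 d) :
    {n : ℤ | d n (0, n) ≠ 0}.Finite := by
  obtain ⟨u, hu⟩ := h
  refine (u.support.finite_toSet.image Prod.snd).subset fun n hn => ⟨(-n, n), ?_, rfl⟩
  have hd : d n (0, n) = n * u (-n, n) := by simp [hu, tact_apply]
  simp_all

/-- the maps `δ¹_{0,0}(L_m) = v_0 ⊗ w_m` and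
`δ²_{0,0}(L_m) = m v_0 ⊗ w_m` are 1-cocycles of the Witt algebra with
coefficients in `𝓕_0 ⊗ 𝓕_0`, and neither is a 1-coboundary. -/
theorem d1_d2_cocycles_not_coboundaries :
    IsCocycle 0 0 (fun m => Finsupp.single ((0 : ℤ), m) (1 : ℂ)) ∧
    IsCocycle 0 0 (fun m => (m : ℂ) • Finsupp.single ((0 : ℤ), m) (1 : ℂ)) ∧
    ¬ IsCoboundary 0 0 (fun m => Finsupp.single ((0 : ℤ), m) (1 : ℂ)) ∧
    ¬ IsCoboundary 0 0 (fun m => (m : ℂ) • Finsupp.single ((0 : ℤ), m) (1 : ℂ)) := by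
  refine ⟨by simpa using isCocycle_affine 1 0, by simpa using isCocycle_affine 0 1,
    fun h => by simpa using h.apply_zero_zero, fun h => ?_⟩
  have hfin := h.finite_setOf_apply_ne_zero
  simp only [Finsupp.smul_apply, single_eq_same, smul_eq_mul, mul_one, ne_eq,
    Int.cast_eq_zero] at hfin
  exact (Set.finite_singleton (0 : ℤ)).infinite_compl hfin
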